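/- arXiv:2604.01331 — 2 statements merged into one kernel-verified Lean document; each statement's English description precedes it below -/
import Mathlib

section
/- Let R be a commutative Noetherian ring, p a prime ideal of R, and k a positive natural number such that the height of p equals k. Let f : Fin k → R be a family of elements with f i ∈ p for every i, and suppose that f i₀ ∈ p^2 for some index i₀. Then the quotient of the localization R_p = Localization.AtPrime p by the ideal generated by the images of the f i has length at least 2 as a module over R_p; in particular this quotient is not a field. -/
/-- The Krull height of a prime ideal: the height of the corresponding point of the
prime spectrum, i.e. the supremum of lengths of chains of primes below it. -/
noncomputable def primeIdealHeight {R : Type*} [CommRing R] (p : Ideal R)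
    (hp : p.IsPrime) : ℕ∞ :=
  Order.height (⟨p, hp⟩ : PrimeSpectrum R)

/-- The length of a module: the supremum of lengths of chains of submodules. -/
noncomputable def moduleLength (R M : Type*) [Semiring R] [AddCommMonoid M]
    [Module R M] : WithBot ℕ∞ :=
  Order.krullDim (Submodule R M)


universe u

section KrullHeightTheorem

open Ideal

open Ideal

lemma my_minimalPrimes_map_of_surjective {R S : Type*} [CommRing R] [CommRing S]
    {φ : R →+* S} (hφ : Function.Surjective φ) {I p : Ideal R}
    (hker : RingHom.ker φ ≤ p) (hmem : p ∈ I.minimalPrimes) :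
    p.map φ ∈ (I.map φ).minimalPrimes := by
  have hp : p.IsPrime := hmem.1.1
  have hIp : I ≤ p := hmem.1.2
  have hmapp : (p.map φ).IsPrime := Ideal.map_isPrime_of_surjective hφ hker
  refine ⟨⟨hmapp, Ideal.map_mono hIp⟩, ?_⟩
  rintro Q ⟨hQ, hIQ⟩ hQle
  have h1 : I ≤ Q.comap φ := le_trans Ideal.le_comap_map (Ideal.comap_mono hIQ)
  have h2 : Q.comap φ ≤ p := by
    have h := Ideal.comap_mono (f := φ) hQle
    rw [Ideal.comap_map_of_surjective φ hφ, ← RingHom.ker_eq_comap_bot] at h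
    exact h.trans (sup_le le_rfl hker)
  have hQp : (Q.comap φ).IsPrime := hQ.comap φ
  have h3 : p ≤ Q.comap φ := hmem.2 ⟨hQp, h1⟩ h2
  calc p.map φ ≤ (Q.comap φ).map φ := Ideal.map_mono h3
    _ = Q := Ideal.map_comap_of_surjective φ hφ Q

lemma my_minimalPrimes_map_localization {R : Type*} [CommRing R] {I p : Ideal R} [hp : p.IsPrime]
    (hmem : p ∈ I.minimalPrimes) :
    IsLocalRing.maximalIdeal (Localization.AtPrime p) ∈
      (I.map (algebraMap R (Localization.AtPrime p))).minimalPrimes := by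
  set S := Localization.AtPrime p
  set φ := algebraMap R S with hφ
  have hmap : p.map φ = IsLocalRing.maximalIdeal S := Localization.AtPrime.map_eq_maximalIdeal
  have hcomap : (IsLocalRing.maximalIdeal S).comap φ = p := Localization.AtPrime.comap_maximalIdeal
  refine ⟨⟨(IsLocalRing.maximalIdeal.isMaximal S).isPrime, ?_⟩, ?_⟩
  · rw [← hmap]; exact Ideal.map_mono hmem.1.2
  rintro Q ⟨hQ, hIQ⟩ hQle
  have h1 : I ≤ Q.comap φ := le_trans Ideal.le_comap_map (Ideal.comap_mono hIQ)
  have h2 : Q.comap φ ≤ p := le_of_eq_of_le rfl ((Ideal.comap_mono (f := φ) hQle).trans (le_of_eq hcomap))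
  have h3 : p ≤ Q.comap φ := hmem.2 ⟨hQ.comap φ, h1⟩ h2
  have h4 : p.map φ ≤ Q :=
    calc p.map φ ≤ (Q.comap φ).map φ := Ideal.map_mono h3
      _ = Q := IsLocalization.map_comap p.primeCompl S Q
  rw [← hmap]; exact h4

set_option maxHeartbeats 1000000 in
set_option synthInstance.maxHeartbeats 400000 in
lemma my_isArtinianRing_of_nilpotent_maximal {B : Type*} [CommRing B] [IsNoetherianRing B]
    {M : Ideal B} (hM : M.IsMaximal) {N : ℕ} (hN : M ^ N = ⊥) : IsArtinianRing B := by
  have key : ∀ j : ℕ, IsArtinian B (B ⧸ (M ^ j : Ideal B)) := by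
    intro j
    induction j with
    | zero =>
      rw [pow_zero, Ideal.one_eq_top]
      have : Subsingleton (B ⧸ (⊤ : Ideal B)) :=
        Submodule.Quotient.subsingleton_iff.mpr rfl
      infer_instance
    | succ j ih =>
      have hle : (M ^ (j + 1) : Ideal B) ≤ M ^ j := Ideal.pow_le_pow_right (Nat.le_succ j)
      set K : Submodule B (B ⧸ (M ^ (j + 1) : Ideal B)) :=
        Submodule.map (M ^ (j + 1) : Ideal B).mkQ (M ^ j : Ideal B) with hK
      rw [isArtinian_iff_submodule_quotient K]
      constructor
      · -- K is a finite-dimensional vector space over B ⧸ M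
        have hsmul : M • K = ⊥ := by
          rw [hK, ← Submodule.map_smul'']
          have h1 : M • (M ^ j : Submodule B B) = ((M ^ (j + 1) : Ideal B) : Submodule B B) := by
            show M • (M ^ j) = (M ^ (j + 1) : Ideal B)
            rw [Ideal.smul_eq_mul, ← pow_succ']
          rw [h1]
          rw [← le_bot_iff, Submodule.map_le_iff_le_comap]
          intro y hy
          simp only [Submodule.comap_bot, Submodule.mem_comap]
          exact (Submodule.Quotient.mk_eq_zero _).mpr hy
        have htor : Module.IsTorsionBySet B K (M : Set B) := by
          intro x a
          have h2 : (a : B) • (x : B ⧸ (M ^ (j + 1) : Ideal B)) ∈ M • K :=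
            Submodule.smul_mem_smul a.2 x.2
          rw [hsmul, Submodule.mem_bot] at h2
          exact Subtype.ext h2
        haveI := hM
        letI : Field (B ⧸ M) := Ideal.Quotient.field M
        letI : Module (B ⧸ M) K := htor.module
        letI : IsScalarTower B (B ⧸ M) K := htor.isScalarTower
        haveI : Module.Finite B K := Module.Finite.iff_fg.mpr (IsNoetherian.noetherian K)
        haveI : Module.Finite (B ⧸ M) K := Module.Finite.of_restrictScalars_finite B (B ⧸ M) K
        haveI : IsArtinianRing (B ⧸ M) := DivisionRing.instIsArtinianRing
        haveI hart : IsArtinian (B ⧸ M) K := isArtinian_of_fg_of_artinian' (R := B ⧸ M) (M := K)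
        -- transfer Artinian-ness from `B ⧸ M` down to `B` (same submodule carriers)
        let F : Submodule B K → Submodule (B ⧸ M) K := fun N =>
          { carrier := N
            add_mem' := fun ha hb => N.add_mem ha hb
            zero_mem' := N.zero_mem
            smul_mem' := by
              rintro ⟨b⟩ x hx
              show (Ideal.Quotient.mk M b) • x ∈ N
              rw [htor.mk_smul]
              exact N.smul_mem b hx }
        have hF : StrictMono F := fun N N' h => by
          refine lt_of_le_of_ne (fun y hy => h.1 hy) (fun heq => h.ne ?_)
          ext y
          constructor
          · intro hy
            have : y ∈ F N := hy
            rw [heq] at this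
            exact this
          · intro hy
            have : y ∈ F N' := hy
            rw [← heq] at this
            exact this
        exact ⟨hF.wellFoundedLT.wf⟩
      · exact isArtinian_of_linearEquiv
          (Submodule.quotientQuotientEquivQuotient _ _ hle).symm
  have := key N
  rw [hN] at this
  exact isArtinian_of_linearEquiv (Submodule.quotEquivOfEqBot (⊥ : Ideal B) rfl)

set_option maxHeartbeats 1000000 in
lemma my_pit_local {A : Type*} [CommRing A] [IsNoetherianRing A] [IsLocalRing A] {x : A}
    (hm : IsLocalRing.maximalIdeal A ∈ (Ideal.span {x}).minimalPrimes)
    {a b : Ideal A} (ha : a.IsPrime) (hb : b.IsPrime) (hab : a < b)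
    (hbm : b < IsLocalRing.maximalIdeal A) : False := by
  set m := IsLocalRing.maximalIdeal A with hmdef
  have hxb : x ∉ b := by
    intro hxb
    have h1 : m ≤ b := hm.2 ⟨hb, Ideal.span_le.mpr (Set.singleton_subset_iff.mpr hxb)⟩ hbm.le
    exact absurd h1 (not_le_of_gt hbm)
  set T := Localization.AtPrime b with hT
  set g := algebraMap A T with hg
  haveI : IsNoetherianRing T := IsLocalization.isNoetherianRing b.primeCompl T inferInstance
  have hmapb : b.map g = IsLocalRing.maximalIdeal T := Localization.AtPrime.map_eq_maximalIdeal
  set Q : ℕ → Ideal A := fun n => ((b.map g) ^ n).comap g with hQ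
  have hQanti : ∀ n, Q (n + 1) ≤ Q n := fun n =>
    Ideal.comap_mono (Ideal.pow_le_pow_right (Nat.le_succ n))
  set Abar := A ⧸ Ideal.span {x} with hAbar
  set mk := Ideal.Quotient.mk (Ideal.span {x}) with hmk
  have hmksurj : Function.Surjective mk := Ideal.Quotient.mk_surjective
  have hker : RingHom.ker mk = Ideal.span {x} := Ideal.mk_ker
  have huniq : ∀ P : Ideal Abar, P.IsPrime → P = m.map mk := by
    intro P hP
    have hPc : (P.comap mk).IsPrime := hP.comap mk
    have hxP : Ideal.span {x} ≤ P.comap mk := fun y hy => by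
      simp only [Ideal.mem_comap]
      rw [Ideal.Quotient.eq_zero_iff_mem.mpr hy]
      exact P.zero_mem
    have hPm : P.comap mk ≤ m := IsLocalRing.le_maximalIdeal hPc.ne_top
    have h1 : m ≤ P.comap mk := hm.2 ⟨hPc, hxP⟩ hPm
    have h2 : P.comap mk = m := le_antisymm hPm h1
    rw [← Ideal.map_comap_of_surjective mk hmksurj P, h2]
  have hcm : Ideal.comap mk (Ideal.map mk m) = m := by
    rw [Ideal.comap_map_of_surjective mk hmksurj, ← RingHom.ker_eq_comap_bot, hker,
      sup_eq_left.mpr hm.1.2]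
  have hmbar_ne : Ideal.map mk m ≠ ⊤ := by
    intro htop
    have h3 : m = ⊤ := by rw [← hcm, htop, Ideal.comap_top]
    exact (IsLocalRing.maximalIdeal.isMaximal A).ne_top h3
  have hmbar_max : (m.map mk).IsMaximal := by
    obtain ⟨Mx, hMx, hle⟩ := Ideal.exists_le_maximal _ hmbar_ne
    rwa [huniq Mx hMx.isPrime] at hMx
  have hnil : nilradical Abar = m.map mk := by
    rw [nilradical_eq_sInf]
    exact le_antisymm (sInf_le hmbar_max.isPrime) (le_sInf fun J hJ => (huniq J hJ).ge)
  obtain ⟨N, hNpow⟩ := IsNoetherianRing.isNilpotent_nilradical Abar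
  rw [hnil] at hNpow
  haveI hart : IsArtinianRing Abar := my_isArtinianRing_of_nilpotent_maximal hmbar_max hNpow
  -- the chain of images of symbolic powers stabilizes
  have hQantiFull : Antitone Q := antitone_nat_of_succ_le hQanti
  let F : ℕ →o (Submodule Abar Abar)ᵒᵈ :=
    ⟨fun n => (Q n).map mk, fun n m' hnm => Ideal.map_mono (hQantiFull hnm)⟩
  obtain ⟨n, hn⟩ := IsArtinian.monotone_stabilizes F
  have heq : (Q (n + 1)).map mk = (Q n).map mk := (hn (n + 1) (Nat.le_succ n)).symm
  have hstep : Q n ≤ Q (n + 1) ⊔ Ideal.span {x} • Q n := by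
    intro y hy
    have h1 : mk y ∈ (Q (n + 1)).map mk := by
      rw [heq]; exact Ideal.mem_map_of_mem mk hy
    obtain ⟨z, hz, hzy⟩ := (Ideal.mem_map_iff_of_surjective mk hmksurj).mp h1
    have hsub : y - z ∈ Ideal.span {x} := by
      rw [← hker, RingHom.mem_ker, map_sub, hzy, sub_self]
    obtain ⟨c, hc⟩ := Ideal.mem_span_singleton'.mp hsub
    have hxc : c * x ∈ Q n := by
      rw [hc]; exact Ideal.sub_mem _ hy (hQanti n hz)
    have hcQ : c ∈ Q n := by
      have hmem : g (c * x) ∈ (b.map g) ^ n := hxc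
      rw [_root_.map_mul] at hmem
      have hu : IsUnit (g x) := IsLocalization.map_units (M := b.primeCompl) T ⟨x, hxb⟩
      show g c ∈ (b.map g) ^ n
      rwa [mul_comm, Ideal.unit_mul_mem_iff_mem _ hu] at hmem
    have hy' : y = z + x * c := by rw [mul_comm x c, hc]; ring
    rw [hy']
    refine Submodule.add_mem_sup hz ?_
    rw [Ideal.smul_eq_mul]
    exact Ideal.mul_mem_mul (Ideal.mem_span_singleton_self x) hcQ
  have hjac : Ideal.span {x} ≤ Ideal.jacobson ⊥ :=
    hm.1.2.trans (le_of_eq (IsLocalRing.jacobson_eq_maximalIdeal ⊥ bot_ne_top).symm)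
  have hQeq : Q n = Q (n + 1) :=
    le_antisymm (Submodule.le_of_le_smul_of_le_jacobson_bot
      (IsNoetherian.noetherian (Q n)) hjac hstep) (hQanti n)
  have hmapQ : ∀ k, (Q k).map g = (b.map g) ^ k := fun k =>
    IsLocalization.map_comap b.primeCompl T _
  have hTeq : (b.map g) ^ n = (b.map g) ^ (n + 1) := by
    rw [← hmapQ, ← hmapQ, hQeq]
  have hTbot : (b.map g) ^ n = ⊥ := by
    refine Submodule.eq_bot_of_le_smul_of_le_jacobson_bot (b.map g) _
      (IsNoetherian.noetherian _) ?_ ?_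
    · rw [Ideal.smul_eq_mul, ← pow_succ']
      exact le_of_eq hTeq
    · rw [hmapb]
      exact le_of_eq (IsLocalRing.jacobson_eq_maximalIdeal ⊥ bot_ne_top).symm
  have hdisj : Disjoint (b.primeCompl : Set A) (a : Set A) := by
    rw [Set.disjoint_left]
    intro y hy hya
    exact hy (hab.le hya)
  haveI haT : (a.map g).IsPrime :=
    IsLocalization.isPrime_of_isPrime_disjoint b.primeCompl T a ha hdisj
  have hpow : (b.map g) ^ n ≤ a.map g := hTbot ▸ bot_le
  have hble : b.map g ≤ a.map g := by
    rcases Nat.eq_zero_or_pos n with hn0 | hn0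
    · exfalso
      rw [hn0, pow_zero, Ideal.one_eq_top] at hTbot
      exact haT.ne_top (eq_top_iff.mpr (hTbot.le.trans bot_le))
    · exact Ideal.IsPrime.le_of_pow_le hpow
  have hba : b ≤ a := by
    have h1 : b ≤ (a.map g).comap g := Ideal.le_comap_map.trans (Ideal.comap_mono hble)
    exact h1.trans (IsLocalization.comap_map_of_isPrime_disjoint b.primeCompl T (I := a) ha hdisj).le
  exact absurd hba (not_le_of_gt hab)

/-- Krull's principal ideal theorem, contradiction form: if `p` is minimal over a principal
ideal, there is no chain `a < b < p` of primes. -/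
lemma my_pit {R : Type*} [CommRing R] [IsNoetherianRing R] {x : R} {p : Ideal R}
    (hp : p ∈ (Ideal.span {x}).minimalPrimes) {a b : Ideal R}
    (ha : a.IsPrime) (hb : b.IsPrime) (hab : a < b) (hbp : b < p) : False := by
  haveI hpp : p.IsPrime := hp.1.1
  set S := Localization.AtPrime p with hS
  set φ := algebraMap R S with hφ
  haveI : IsNoetherianRing S := IsLocalization.isNoetherianRing p.primeCompl S inferInstance
  have hm : IsLocalRing.maximalIdeal S ∈ ((Ideal.span {x}).map φ).minimalPrimes :=
    my_minimalPrimes_map_localization hp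
  rw [Ideal.map_span, Set.image_singleton] at hm
  have hdisj : ∀ q : Ideal R, q ≤ p → Disjoint (p.primeCompl : Set R) (q : Set R) := by
    intro q hq
    rw [Set.disjoint_left]
    intro y hy hyq
    exact hy (hq hyq)
  have hap : a ≤ p := hab.le.trans hbp.le
  have hbp' : b ≤ p := hbp.le
  haveI haS : (a.map φ).IsPrime :=
    IsLocalization.isPrime_of_isPrime_disjoint p.primeCompl S a ha (hdisj a hap)
  haveI hbS : (b.map φ).IsPrime :=
    IsLocalization.isPrime_of_isPrime_disjoint p.primeCompl S b hb (hdisj b hbp')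
  have hca : (a.map φ).comap φ = a :=
    IsLocalization.comap_map_of_isPrime_disjoint p.primeCompl S (I := a) ha (hdisj a hap)
  have hcb : (b.map φ).comap φ = b :=
    IsLocalization.comap_map_of_isPrime_disjoint p.primeCompl S (I := b) hb (hdisj b hbp')
  have hmapp : p.map φ = IsLocalRing.maximalIdeal S := Localization.AtPrime.map_eq_maximalIdeal
  have hcomapm : (IsLocalRing.maximalIdeal S).comap φ = p :=
    Localization.AtPrime.comap_maximalIdeal
  refine my_pit_local hm haS hbS ?_ ?_
  · refine lt_of_le_of_ne (Ideal.map_mono hab.le) fun h => hab.ne ?_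
    rw [← hca, ← hcb, h]
  · refine lt_of_le_of_ne (le_trans (Ideal.map_mono hbp.le) hmapp.le) fun h => hbp.ne ?_
    rw [← hcb, h]; exact hcomapm

/-- "Bumping" a prime chain: given `a < b < c` and `x ∈ c`, there is a prime `b'`
with `a < b' < c` and `x ∈ b'`. Uses the principal ideal theorem. -/
lemma my_bump {R : Type*} [CommRing R] [IsNoetherianRing R] {x : R} {a b c : Ideal R}
    (ha : a.IsPrime) (hb : b.IsPrime) (hc : c.IsPrime) (hab : a < b) (hbc : b < c)
    (hxc : x ∈ c) : ∃ b' : Ideal R, b'.IsPrime ∧ a < b' ∧ b' < c ∧ x ∈ b' := by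
  by_cases hxa : x ∈ a
  · exact ⟨b, hb, hab, hbc, hab.le hxa⟩
  obtain ⟨b', hb'mem, hb'le⟩ := Ideal.exists_minimalPrimes_le (I := a ⊔ Ideal.span {x}) (J := c)
    (sup_le (hab.le.trans hbc.le) (Ideal.span_le.mpr (Set.singleton_subset_iff.mpr hxc)))
  haveI hb'p : b'.IsPrime := hb'mem.1.1
  have hxb' : x ∈ b' :=
    (le_sup_right.trans hb'mem.1.2) (Ideal.mem_span_singleton_self x)
  have hab' : a < b' := lt_of_le_of_ne (le_sup_left.trans hb'mem.1.2) fun h => hxa (h ▸ hxb')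
  refine ⟨b', hb'p, hab', lt_of_le_of_ne hb'le ?_, hxb'⟩
  rintro rfl
  -- now `c` is minimal over `a ⊔ (x)`; pass to `R ⧸ a` and contradict the PIT
  set mk := Ideal.Quotient.mk a with hmk
  have hsurj : Function.Surjective mk := Ideal.Quotient.mk_surjective
  have hker : RingHom.ker mk = a := Ideal.mk_ker
  have hmin : (b'.map mk) ∈ ((a ⊔ Ideal.span {x}).map mk).minimalPrimes :=
    my_minimalPrimes_map_of_surjective hsurj (hker.le.trans (hab.le.trans hbc.le)) hb'mem
  have hspan : (a ⊔ Ideal.span {x}).map mk = Ideal.span {mk x} := by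
    rw [Ideal.map_sup, Ideal.map_span, Set.image_singleton, Ideal.map_quotient_self, bot_sup_eq]
  rw [hspan] at hmin
  have hmaplt : ∀ q q' : Ideal R, a ≤ q → q < q' → q.map mk < q'.map mk := by
    intro q q' haq hqq'
    have hcm : ∀ s : Ideal R, a ≤ s → (s.map mk).comap mk = s := by
      intro s hs
      rw [Ideal.comap_map_of_surjective mk hsurj, ← RingHom.ker_eq_comap_bot, hker,
        sup_eq_left.mpr hs]
    refine lt_of_le_of_ne (Ideal.map_mono hqq'.le) fun h => hqq'.ne ?_
    rw [← hcm q haq, ← hcm q' (haq.trans hqq'.le), h]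
  have hprime : ∀ q : Ideal R, a ≤ q → q.IsPrime → (q.map mk).IsPrime := by
    intro q hq hqp
    exact Ideal.map_isPrime_of_surjective hsurj (by rw [hker]; exact hq)
  exact my_pit hmin (hprime a le_rfl ha) (hprime b hab.le hb)
    (hmaplt a b le_rfl hab) (hmaplt b b' hab.le hbc)

/-- From a chain of length `r + 1` ending at a prime containing `x`, extract a chain of
length `r` with the same top all of whose members contain `x`, sitting strictly above the
old bottom. -/
lemma my_chain_shrink {R : Type*} [CommRing R] [IsNoetherianRing R] (x : R) :
    ∀ (r : ℕ) (c : LTSeries (PrimeSpectrum R)), c.length = r + 1 → x ∈ c.last.asIdeal →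
    ∃ d : LTSeries (PrimeSpectrum R), d.length = r ∧ d.last = c.last ∧
      x ∈ d.head.asIdeal ∧ c.head < d.head := by
  intro r
  induction r with
  | zero =>
    intro c hlen hx
    refine ⟨RelSeries.singleton _ c.last, rfl, RelSeries.last_singleton _, hx, ?_⟩
    show c.head < c.last
    exact c.strictMono (show (0 : Fin (c.length + 1)) < Fin.last c.length by
      rw [Fin.lt_def]; simp [hlen])
  | succ r ih =>
    intro c hlen hx
    have hne : c.length ≠ 0 := by omega
    set t := c.tail hne with ht
    have htlen : t.length = r + 1 := by simp [ht, hlen]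
    have htlast : t.last = c.last := RelSeries.last_tail _ _
    obtain ⟨d, hdlen, hdlast', hdmem, hdhead⟩ := ih t htlen (htlast ▸ hx)
    have hdlast := hdlast'.trans htlast
    have h1 : c.head < t.head := by
      rw [RelSeries.head_tail]
      have : c.toFun (Fin.castSucc ⟨0, by omega⟩) < c.toFun (Fin.succ ⟨0, by omega⟩) :=
        c.step ⟨0, by omega⟩
      convert this using 2
      · rfl
      ext
      simp [Fin.val_one, Nat.mod_eq_of_lt (by omega : 1 < c.length + 1)]
    obtain ⟨b', hb'p, h2, h3, h4⟩ := my_bump c.head.isPrime t.head.isPrime d.head.isPrime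
      h1 hdhead hdmem
    let b'pt : PrimeSpectrum R := ⟨b', hb'p⟩
    have hb'd : b'pt < d.head := h3
    refine ⟨d.cons b'pt hb'd, by simp [hdlen], by rw [RelSeries.last_cons]; exact hdlast,
      ?_, ?_⟩
    · show x ∈ (d.cons b'pt hb'd).head.asIdeal
      rw [RelSeries.head_cons]
      exact h4
    · show c.head < (d.cons b'pt hb'd).head
      rw [RelSeries.head_cons]
      exact h2

/-- Krull's height theorem: if a prime `p` is minimal over an ideal generated by `n`
elements, then every chain of primes ending at `p` has length at most `n`. -/
lemma my_kht (n : ℕ) : ∀ {R : Type u} [CommRing R] [IsNoetherianRing R], ∀ {p : Ideal R}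
    (f : Fin n → R), p ∈ (Ideal.span (Set.range f)).minimalPrimes →
    ∀ c : LTSeries (PrimeSpectrum R), c.last.asIdeal = p → c.length ≤ n := by
  induction n with
  | zero =>
    intro R _ _ p f hmem c hlast
    rw [Set.range_eq_empty, Ideal.span_empty] at hmem
    by_contra hlen
    have hne : c.length ≠ 0 := by omega
    have hlt : c.eraseLast.last < c.last := c.eraseLast_last_rel_last hne
    have hle : p ≤ c.eraseLast.last.asIdeal :=
      hmem.2 ⟨c.eraseLast.last.isPrime, bot_le⟩ (le_of_lt (hlast ▸ hlt))
    exact absurd (lt_of_le_of_lt hle (hlast ▸ hlt)) (lt_irrefl p)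
  | succ n ih =>
    intro R _ _ p f hmem c hlast
    by_cases hlen : c.length = 0
    · omega
    obtain ⟨r, hr⟩ : ∃ r, c.length = r + 1 := ⟨c.length - 1, by omega⟩
    set x := f 0 with hx
    have hxp : x ∈ p := hmem.1.2 (Ideal.subset_span (Set.mem_range_self 0))
    obtain ⟨d, hdlen, hdlast, hdmem, -⟩ := my_chain_shrink x r c hr (hlast ▸ hxp)
    have hdall : ∀ i, x ∈ (d i).asIdeal := fun i => (d.monotone (Fin.zero_le i)) hdmem
    set mk := Ideal.Quotient.mk (Ideal.span {x}) with hmk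
    have hsurj : Function.Surjective mk := Ideal.Quotient.mk_surjective
    have hker : RingHom.ker mk = Ideal.span {x} := Ideal.mk_ker
    have hkerle : ∀ i, RingHom.ker mk ≤ (d i).asIdeal := fun i => by
      rw [hker]
      exact Ideal.span_le.mpr (Set.singleton_subset_iff.mpr (hdall i))
    have hprime : ∀ i, ((d i).asIdeal.map mk).IsPrime := fun i =>
      Ideal.map_isPrime_of_surjective hsurj (hkerle i)
    have hcm : ∀ i, ((d i).asIdeal.map mk).comap mk = (d i).asIdeal := fun i => by
      rw [Ideal.comap_map_of_surjective mk hsurj, ← RingHom.ker_eq_comap_bot,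
        sup_eq_left.mpr (hkerle i)]
    let D : LTSeries (PrimeSpectrum (R ⧸ Ideal.span {x})) :=
      { length := d.length
        toFun := fun i => ⟨(d i).asIdeal.map mk, hprime i⟩
        step := fun i => by
          have hstep : d i.castSucc < d i.succ := d.step i
          show ((d i.castSucc).asIdeal.map mk) < ((d i.succ).asIdeal.map mk)
          refine lt_of_le_of_ne (Ideal.map_mono (le_of_lt hstep)) fun h => hstep.ne ?_
          apply PrimeSpectrum.ext
          rw [← hcm i.castSucc, ← hcm i.succ, h] }
    -- minimality in the quotient
    have hkerp : RingHom.ker mk ≤ p := by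
      rw [hker]
      exact Ideal.span_le.mpr (Set.singleton_subset_iff.mpr hxp)
    have hmem' := my_minimalPrimes_map_of_surjective hsurj hkerp hmem
    set f' : Fin n → (R ⧸ Ideal.span {x}) := fun j => mk (f j.succ) with hf'
    have hspan : (Ideal.span (Set.range f)).map mk = Ideal.span (Set.range f') := by
      rw [Ideal.map_span, ← Set.range_comp]
      apply le_antisymm
      · rw [Ideal.span_le]
        rintro _ ⟨i, rfl⟩
        refine Fin.cases ?_ ?_ i
        · show mk (f 0) ∈ _
          rw [Ideal.Quotient.eq_zero_iff_mem.mpr (Ideal.mem_span_singleton_self x)]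
          exact Ideal.zero_mem _
        · intro j
          exact Ideal.subset_span ⟨j, rfl⟩
      · rw [Ideal.span_le]
        rintro _ ⟨j, rfl⟩
        exact Ideal.subset_span ⟨j.succ, rfl⟩
    rw [hspan] at hmem'
    have hDlast : D.last.asIdeal = p.map mk := by
      show ((d (Fin.last d.length)).asIdeal.map mk) = p.map mk
      have : (d (Fin.last d.length)).asIdeal = p := by
        have h5 : d.last = c.last := hdlast
        rw [show d (Fin.last d.length) = d.last from rfl, h5, hlast]
      rw [this]
    have := ih f' hmem' D hDlast
    have hDlen : D.length = d.length := rfl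
    omega

end KrullHeightTheorem

set_option maxHeartbeats 1000000 in
/-- If `p` is a prime of height `k` in a Noetherian ring, `f : Fin k → R` takes values
in `p` and some `f i₀` lies in `p²`, then `R_p` modulo the ideal generated by the images
of the `f i` has length at least `2` over `R_p`; in particular it is not a field. -/
theorem stmt_0 {R : Type*} [CommRing R] [IsNoetherianRing R] (p : Ideal R)
    (hp : p.IsPrime) (k : ℕ) (hk : 0 < k) (hht : primeIdealHeight p hp = k)
    (f : Fin k → R) (hf : ∀ i, f i ∈ p) (i₀ : Fin k) (hi₀ : f i₀ ∈ p ^ 2) :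
    2 ≤ moduleLength (Localization.AtPrime p)
        ((Localization.AtPrime p) ⧸
          (Ideal.span (Set.range f)).map (algebraMap R (Localization.AtPrime p))) ∧
      ¬ IsField ((Localization.AtPrime p) ⧸
          (Ideal.span (Set.range f)).map (algebraMap R (Localization.AtPrime p))) := by
  obtain ⟨k', rfl⟩ := Nat.exists_eq_succ_of_ne_zero hk.ne'
  set S := Localization.AtPrime p with hS
  set φ := algebraMap R S with hφ
  haveI : IsNoetherianRing S := IsLocalization.isNoetherianRing p.primeCompl S inferInstance
  set J := (Ideal.span (Set.range f)).map φ with hJ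
  set m := IsLocalRing.maximalIdeal S with hm
  have hmapp : p.map φ = m := Localization.AtPrime.map_eq_maximalIdeal
  have hJm : J ≤ m := by
    rw [hJ, ← hmapp]
    exact Ideal.map_mono (Ideal.span_le.mpr (Set.range_subset_iff.mpr hf))
  haveI hmmax := IsLocalRing.maximalIdeal.isMaximal S
  have hJne : J ≠ m := by
    intro hJeq
    set g : Fin (k' + 1) → S := fun i => φ (f i) with hg
    have hspan : J = Ideal.span (Set.range g) := by
      rw [hJ, Ideal.map_span, ← Set.range_comp]
      rfl
    have hgi₀ : g i₀ ∈ m * m := by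
      have h2 : φ (f i₀) ∈ (p ^ 2).map φ := Ideal.mem_map_of_mem φ hi₀
      rw [Ideal.map_pow, hmapp, pow_two] at h2
      exact h2
    set N := Ideal.span (Set.range (g ∘ i₀.succAbove)) with hN
    have hmle : m ≤ N ⊔ m • m := by
      conv_lhs => rw [← hJeq, hspan]
      rw [Ideal.span_le]
      rintro _ ⟨i, rfl⟩
      rcases eq_or_ne i i₀ with rfl | hne
      · apply Submodule.mem_sup_right
        rw [Ideal.smul_eq_mul]
        exact hgi₀
      · obtain ⟨j, rfl⟩ := Fin.exists_succAbove_eq hne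
        exact Submodule.mem_sup_left (Ideal.subset_span ⟨j, rfl⟩)
    have hNm : N ≤ m := by
      rw [hN, Ideal.span_le]
      rintro _ ⟨j, rfl⟩
      rw [← hJeq, hspan]
      exact Ideal.subset_span ⟨i₀.succAbove j, rfl⟩
    have hjac : m ≤ Ideal.jacobson ⊥ :=
      le_of_eq (IsLocalRing.jacobson_eq_maximalIdeal ⊥ bot_ne_top).symm
    have hmN : m ≤ N :=
      Submodule.le_of_le_smul_of_le_jacobson_bot (IsNoetherian.noetherian m) hjac hmle
    have hNeq : N = m := le_antisymm hNm hmN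
    have hmmin : m ∈ N.minimalPrimes := by
      rw [hNeq, Ideal.minimalPrimes_eq_subsingleton_self]
      exact Set.mem_singleton _
    -- a chain of primes of length `k` ending at `p`, moved into the localization
    have hhk : ((k' + 1 : ℕ) : ℕ∞) ≤ Order.height (⟨p, hp⟩ : PrimeSpectrum R) := hht.ge
    obtain ⟨cR, hclast, hclen⟩ :=
      Order.exists_series_of_le_height (⟨p, hp⟩ : PrimeSpectrum R) hhk
    have hcle : ∀ i, (cR i).asIdeal ≤ p := fun i => by
      have h3 := cR.monotone (Fin.le_last i)
      rw [show cR (Fin.last cR.length) = cR.last from rfl, hclast] at h3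
      exact h3
    have hdisj : ∀ q : Ideal R, q ≤ p → Disjoint (p.primeCompl : Set R) (q : Set R) := by
      intro q hq
      rw [Set.disjoint_left]
      intro y hy hyq
      exact hy (hq hyq)
    have hprime : ∀ i, ((cR i).asIdeal.map φ).IsPrime := fun i =>
      IsLocalization.isPrime_of_isPrime_disjoint p.primeCompl S _ (cR i).isPrime
        (hdisj _ (hcle i))
    have hcomap : ∀ i, ((cR i).asIdeal.map φ).comap φ = (cR i).asIdeal := fun i =>
      IsLocalization.comap_map_of_isPrime_disjoint p.primeCompl S (cR i).isPrime
        (hdisj _ (hcle i))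
    let D : LTSeries (PrimeSpectrum S) :=
      { length := cR.length
        toFun := fun i => ⟨(cR i).asIdeal.map φ, hprime i⟩
        step := fun i => by
          have hstep : cR i.castSucc < cR i.succ := cR.step i
          show ((cR i.castSucc).asIdeal.map φ) < ((cR i.succ).asIdeal.map φ)
          refine lt_of_le_of_ne (Ideal.map_mono (le_of_lt hstep)) fun h => hstep.ne ?_
          apply PrimeSpectrum.ext
          rw [← hcomap i.castSucc, ← hcomap i.succ, h] }
    have hDlast : D.last.asIdeal = m := by
      show ((cR (Fin.last cR.length)).asIdeal.map φ) = m
      rw [show cR (Fin.last cR.length) = cR.last from rfl, hclast]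
      exact hmapp
    have hle := my_kht k' (g ∘ i₀.succAbove) (hN ▸ hmmin) D hDlast
    have : D.length = cR.length := rfl
    omega
  have hJtop : J ≠ ⊤ := fun h => hmmax.ne_top (top_le_iff.mp (h ▸ hJm))
  constructor
  · -- module length at least 2
    set K : Submodule S (S ⧸ J) := Submodule.map (J : Submodule S S).mkQ (m : Submodule S S)
      with hK
    have hKbot : K ≠ ⊥ := by
      intro h
      apply hJne (le_antisymm hJm ?_)
      intro y hy
      have h4 : (J : Submodule S S).mkQ y ∈ K := Submodule.mem_map_of_mem hy
      rw [h, Submodule.mem_bot] at h4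
      rwa [← Submodule.Quotient.mk_eq_zero J, ← Submodule.mkQ_apply]
    have hKtop : K ≠ ⊤ := by
      intro h
      have h5 : Submodule.comap (J : Submodule S S).mkQ K = ⊤ := by rw [h, Submodule.comap_top]
      rw [hK, Submodule.comap_map_eq, Submodule.ker_mkQ] at h5
      have h6 : (m : Submodule S S) = ⊤ := by
        rw [← h5, sup_eq_left.mpr hJm]
      exact hmmax.ne_top h6
    let C : LTSeries (Submodule S (S ⧸ J)) :=
      { length := 2
        toFun := ![⊥, K, ⊤]
        step := fun i => by
          fin_cases i
          · show (⊥ : Submodule S (S ⧸ J)) < K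
            exact bot_lt_iff_ne_bot.mpr hKbot
          · show K < ⊤
            exact lt_top_iff_ne_top.mpr hKtop }
    have h7 := Order.LTSeries.length_le_krullDim C
    show (2 : WithBot ℕ∞) ≤ Order.krullDim (Submodule S (S ⧸ J))
    exact_mod_cast h7
  · intro hfield
    have hmax : J.IsMaximal := Ideal.Quotient.maximal_of_isField J hfield
    exact hJne (hmax.eq_of_le hmmax.ne_top hJm)
end

section
/- Let A be a commutative ring equipped with a ℤ-grading 𝒜 (so A = ⊕_{n∈ℤ} 𝒜 n as a graded ring). Let I ⊆ A be the ideal generated by all homogeneous elements of negative degree, and suppose there is a set G ⊆ A generating I as an ideal such that every g ∈ G is homogeneous of degree w(g) with −m ≤ w(g) ≤ −1, for a fixed natural number m. Then every homogeneous element f ∈ 𝒜 w with w ≤ −m−1 lies in I^2. -/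
open DirectSum

private lemma proj_mul_right_mem {A : Type*} [CommRing A] (𝒜 : ℤ → AddSubgroup A)
    [GradedRing 𝒜] {b : A} {i : ℤ} (hb : b ∈ 𝒜 i) (a : A) (n : ℤ) :
    GradedRing.proj 𝒜 n (a * b) = GradedRing.proj 𝒜 (n - i) a * b := by
  induction a using DirectSum.Decomposition.inductionOn 𝒜 with
  | zero => simp
  | @homogeneous j x =>
    obtain ⟨x, hx⟩ := x
    by_cases h : n = j + i
    · have hxb : x * b ∈ 𝒜 (j + i) := SetLike.mul_mem_graded hx hb
      rw [GradedRing.proj_apply, GradedRing.proj_apply,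
        DirectSum.decompose_of_mem_same 𝒜 (h ▸ hxb),
        DirectSum.decompose_of_mem_same 𝒜 (show x ∈ 𝒜 (n - i) by rw [h]; simpa using hx)]
    · have hxb : x * b ∈ 𝒜 (j + i) := SetLike.mul_mem_graded hx hb
      rw [GradedRing.proj_apply, GradedRing.proj_apply,
        DirectSum.decompose_of_mem_ne 𝒜 hxb (fun hh => h hh.symm),
        DirectSum.decompose_of_mem_ne 𝒜 hx (show j ≠ n - i by omega), zero_mul]
  | add x y hx hy => rw [add_mul, map_add, map_add, hx, hy, add_mul]

/-- The graded-ring step: let `A` be ℤ-graded, `I` the ideal generated by homogeneous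
elements of negative degree, and suppose `I` is generated by a set `G` of homogeneous
elements whose degrees lie in `[−m, −1]`. Then any homogeneous element of degree
`≤ −m−1` lies in `I²`. -/
theorem stmt_2 {A : Type*} [CommRing A] (𝒜 : ℤ → AddSubgroup A) [GradedRing 𝒜]
    (m : ℕ) (I : Ideal A)
    (hI : I = Ideal.span {x : A | ∃ n : ℤ, n < 0 ∧ x ∈ 𝒜 n})
    (G : Set A) (hG : Ideal.span G = I)
    (hGhom : ∀ g ∈ G, ∃ w : ℤ, -(m : ℤ) ≤ w ∧ w ≤ -1 ∧ g ∈ 𝒜 w)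
    (w : ℤ) (hw : w ≤ -(m : ℤ) - 1) (f : A) (hf : f ∈ 𝒜 w) :
    f ∈ I ^ 2 := by
  -- f ∈ I
  have hfI : f ∈ Ideal.span G := by
    rw [hG, hI]
    exact Ideal.subset_span ⟨w, by omega, hf⟩
  obtain ⟨c, hsupp, hc⟩ := Submodule.mem_span_set.mp hfI
  have hfeq : f = GradedRing.proj 𝒜 w f := by
    rw [GradedRing.proj_apply, DirectSum.decompose_of_mem_same 𝒜 hf]
  rw [hfeq, ← hc, Finsupp.sum, map_sum]
  apply Ideal.sum_mem
  intro g hg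
  obtain ⟨wg, hwg1, hwg2, hwg3⟩ := hGhom g (hsupp hg)
  rw [smul_eq_mul, proj_mul_right_mem 𝒜 hwg3]
  have h1 : GradedRing.proj 𝒜 (w - wg) (c g) ∈ I := by
    rw [hI]
    exact Ideal.subset_span ⟨w - wg, by omega, SetLike.coe_mem _⟩
  have h2 : g ∈ I := hG ▸ Ideal.subset_span (hsupp hg)
  rw [pow_two]
  exact Ideal.mul_mem_mul h1 h2
end
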